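/- For every γ ∈ (0, D*) there exist λ₁, λ₂ ∈ [0,1] with λ₂ < λ* < λ₁ such that D(P^(λ₁)‖P₂) = γ and D(P^(λ₂)‖P₁) = γ; consequently min{D(P^(λ₁)‖P₂), D(P^(λ₂)‖P₁)} = γ and the thresholds α₁ = D(P^(λ₂)‖P₂) − D(P^(λ₂)‖P₁) and β₁ = D(P^(λ₁)‖P₂) − D(P^(λ₁)‖P₁) satisfy α₁ > 0 > β₁, in particular α₁ > β₁. -/

import Mathlib

/-!
The divergences `λ ↦ D(P^(λ)‖P₁)` and `λ ↦ D(P^(λ)‖P₂)` are continuous, vanish at `λ = 0` and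
`λ = 1` respectively, and both equal `D*` at `λ*`; the intermediate value theorem gives
`l₂ ∈ (0, λ*)` and `l₁ ∈ (λ*, 1)`. Writing `P^(λ) ∝ P₁ exp (λ log (P₂ / P₁))`, the difference
`D(P^(λ)‖P₂) - D(P^(λ)‖P₁)` is minus the mean of `log (P₂ / P₁)` under `P^(λ)`. An exponentially
tilted mean of a nonconstant function strictly increases with the tilt, and the difference
vanishes at `λ*`, which gives the signs of `α₁` and `β₁`.
-/

open Real Filter Finset MeasureTheory
open scoped Classical

variable {𝒳 : Type*} [Fintype 𝒳] [DecidableEq 𝒳] [Nonempty 𝒳]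

/-- Kullback–Leibler divergence `D(Q‖P)` between pmfs on a finite alphabet. -/
noncomputable def kl (Q P : 𝒳 → ℝ) : ℝ :=
  ∑ x, Q x * Real.log (Q x / P x)

/-- The `λ`-tilted distribution `P^(λ)` of `P₁` and `P₂`. -/
noncomputable def tilt (P₁ P₂ : 𝒳 → ℝ) (l : ℝ) : 𝒳 → ℝ :=
  fun x => P₁ x ^ (1 - l) * P₂ x ^ l / ∑ a, P₁ a ^ (1 - l) * P₂ a ^ l

/-- Probability of a set of length-`N` sample paths under i.i.d. sampling from `P`. -/
noncomputable def prodProb (P : 𝒳 → ℝ) {N : ℕ} (S : Set (Fin N → 𝒳)) : ℝ :=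
  ∑ ω : Fin N → 𝒳, S.indicator (fun ω' => ∏ i, P (ω' i)) ω

/-- The fixed-length error-exponent region `R_FD`. -/
def RFD (P₁ P₂ : 𝒳 → ℝ) : Set (ℝ × ℝ) :=
  {p | 0 ≤ p.1 ∧ 0 ≤ p.2 ∧
    ∃ l ∈ Set.Icc (0:ℝ) 1,
      p.1 ≤ kl (tilt P₁ P₂ l) P₁ ∧ p.2 ≤ kl (tilt P₁ P₂ l) P₂}

/-- `E₁(γ) = max{D(P^(λ)‖P₁) : λ ∈ [0,1], D(P^(λ)‖P₂) ≥ γ}` (sup of the empty set is 0). -/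
noncomputable def E1exp (P₁ P₂ : 𝒳 → ℝ) (γ : ℝ) : ℝ :=
  sSup {E | ∃ l ∈ Set.Icc (0:ℝ) 1, γ ≤ kl (tilt P₁ P₂ l) P₂ ∧ E = kl (tilt P₁ P₂ l) P₁}

/-- `E₂(γ) = max{D(P^(λ)‖P₂) : λ ∈ [0,1], D(P^(λ)‖P₁) ≥ γ}` (sup of the empty set is 0). -/
noncomputable def E2exp (P₁ P₂ : 𝒳 → ℝ) (γ : ℝ) : ℝ :=
  sSup {E | ∃ l ∈ Set.Icc (0:ℝ) 1, γ ≤ kl (tilt P₁ P₂ l) P₁ ∧ E = kl (tilt P₁ P₂ l) P₂}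

/-- A sequential hypothesis test whose stopping time is bounded by `N`:
a stopping time `τ` for the coordinate filtration, together with decision events
`A1`, `A2` that are determined by the samples observed up to time `τ`,
are disjoint, and exhaust the sample space. -/
structure HypTest (𝒳 : Type*) (N : ℕ) where
  τ : (Fin N → 𝒳) → ℕ
  A1 : Set (Fin N → 𝒳)
  A2 : Set (Fin N → 𝒳)
  tau_le : ∀ ω, τ ω ≤ N
  stopping : ∀ ω ω', (∀ i : Fin N, (i : ℕ) < τ ω → ω i = ω' i) → τ ω' = τ ω
  adapted1 : ∀ ω ω', (∀ i : Fin N, (i : ℕ) < τ ω → ω i = ω' i) → (ω ∈ A1 ↔ ω' ∈ A1)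
  adapted2 : ∀ ω ω', (∀ i : Fin N, (i : ℕ) < τ ω → ω i = ω' i) → (ω ∈ A2 ↔ ω' ∈ A2)
  disj : Disjoint A1 A2
  exhaust : A1 ∪ A2 = Set.univ

/-- `(E₁, E₂)` is achievable by `γ`-almost-fixed-length tests. -/
def AFLAchievable (P₁ P₂ : 𝒳 → ℝ) (γ E₁ E₂ : ℝ) : Prop :=
  0 ≤ E₁ ∧ 0 ≤ E₂ ∧
  ∃ c : ℝ, 0 < c ∧ ∃ l : ℕ, 0 < l ∧
    ∀ δ : ℝ, 0 < δ → ∃ n₀ : ℕ, ∀ n : ℕ, n₀ ≤ n →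
      ∃ N : ℕ, (N : ℝ) ≤ c * (n : ℝ) ^ l ∧
        ∃ T : HypTest 𝒳 N,
          prodProb P₁ {ω | n < T.τ ω} ≤ Real.exp (-(γ * n)) ∧
          prodProb P₂ {ω | n < T.τ ω} ≤ Real.exp (-(γ * n)) ∧
          prodProb P₁ T.A2 ≤ Real.exp (-((E₁ - δ) * n)) ∧
          prodProb P₂ T.A1 ≤ Real.exp (-((E₂ - δ) * n))

/-- `(E₁, E₂, E_Ω)` is achievable by fixed-length tests with a rejection option. -/
def RejAchievable (P₁ P₂ : 𝒳 → ℝ) (E₁ E₂ EΩ : ℝ) : Prop :=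
  0 ≤ E₁ ∧ 0 ≤ E₂ ∧ 0 ≤ EΩ ∧
  ∀ δ : ℝ, 0 < δ → ∃ n₀ : ℕ, ∀ n : ℕ, n₀ ≤ n →
    ∃ A1 A2 AΩ : Set (Fin n → 𝒳),
      Disjoint A1 A2 ∧ Disjoint A1 AΩ ∧ Disjoint A2 AΩ ∧ A1 ∪ A2 ∪ AΩ = Set.univ ∧
      prodProb P₁ A2 ≤ Real.exp (-((E₁ - δ) * n)) ∧
      prodProb P₂ A1 ≤ Real.exp (-((E₂ - δ) * n)) ∧
      prodProb P₁ AΩ + prodProb P₂ AΩ ≤ Real.exp (-((EΩ - δ) * n))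

/-- Sum of the log-likelihood ratios of the first `n` samples. -/
noncomputable def S1 (P₁ P₂ : 𝒳 → ℝ) (n : ℕ) {N : ℕ} (ω : Fin N → 𝒳) : ℝ :=
  ∑ i ∈ Finset.univ.filter (fun i : Fin N => (i : ℕ) < n),
    Real.log (P₁ (ω i) / P₂ (ω i))

/-- Sum of the log-likelihood ratios of the samples after time `n`. -/
noncomputable def S2 (P₁ P₂ : 𝒳 → ℝ) (n : ℕ) {N : ℕ} (ω : Fin N → 𝒳) : ℝ :=
  ∑ i ∈ Finset.univ.filter (fun i : Fin N => n ≤ (i : ℕ)),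
    Real.log (P₁ (ω i) / P₂ (ω i))

/-- Event that the two-phase test (phase-one thresholds `α₁ > β₁`, phase-two threshold `α`)
chooses `H₁`. -/
def twoPhaseA1 (P₁ P₂ : 𝒳 → ℝ) (k n : ℕ) (α₁ β₁ α : ℝ) : Set (Fin ((k + 1) * n) → 𝒳) :=
  {ω | α₁ ≤ S1 P₁ P₂ n ω / n ∨
    (β₁ < S1 P₁ P₂ n ω / n ∧ S1 P₁ P₂ n ω / n < α₁ ∧ α ≤ S2 P₁ P₂ n ω / (k * n))}

/-- Event that the two-phase test chooses `H₂`. -/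
def twoPhaseA2 (P₁ P₂ : 𝒳 → ℝ) (k n : ℕ) (α₁ β₁ α : ℝ) : Set (Fin ((k + 1) * n) → 𝒳) :=
  {ω | S1 P₁ P₂ n ω / n ≤ β₁ ∨
    (β₁ < S1 P₁ P₂ n ω / n ∧ S1 P₁ P₂ n ω / n < α₁ ∧ S2 P₁ P₂ n ω / (k * n) < α)}

/-- Stopping time of the two-phase test: `n` if phase one is decisive, `(k+1)n` otherwise. -/
noncomputable def twoPhaseTau (P₁ P₂ : 𝒳 → ℝ) (k n : ℕ) (α₁ β₁ : ℝ)
    (ω : Fin ((k + 1) * n) → 𝒳) : ℕ :=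
  if β₁ < S1 P₁ P₂ n ω / n ∧ S1 P₁ P₂ n ω / n < α₁ then (k + 1) * n else n

section TiltedMean

variable {ι : Type*} [Fintype ι]

noncomputable def tiltedMean (w f : ι → ℝ) (s : ℝ) : ℝ :=
  (∑ i, w i * exp (s * f i) * f i) / ∑ i, w i * exp (s * f i)

lemma exp_tilt_swap_mul_sub_pos {s t a b : ℝ} (hst : s < t) (hab : a ≠ b) :
    0 < (exp (t * a + s * b) - exp (s * a + t * b)) * (a - b) := by
  rcases hab.lt_or_gt with hab | hab
  · have : exp (t * a + s * b) < exp (s * a + t * b) := exp_lt_exp.2 (by nlinarith)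
    exact mul_pos_of_neg_of_neg (by linarith) (by linarith)
  · have : exp (s * a + t * b) < exp (t * a + s * b) := exp_lt_exp.2 (by nlinarith)
    exact mul_pos (by linarith) (by linarith)

lemma exp_tilt_swap_mul_sub_nonneg {s t : ℝ} (hst : s < t) (a b : ℝ) :
    0 ≤ (exp (t * a + s * b) - exp (s * a + t * b)) * (a - b) := by
  rcases eq_or_ne a b with rfl | hab
  · simp
  · exact (exp_tilt_swap_mul_sub_pos hst hab).le

-- Symmetrizing the cross difference of numerators and denominators of `tiltedMean` makes
-- every summand nonnegative.
lemma sum_sum_exp_tilt_swap (w f : ι → ℝ) (s t : ℝ) :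
    ∑ i, ∑ j, w i * w j * ((exp (t * f i + s * f j) - exp (s * f i + t * f j)) * (f i - f j))
      = 2 * ((∑ i, w i * exp (t * f i) * f i) * ∑ j, w j * exp (s * f j)
          - (∑ i, w i * exp (s * f i) * f i) * ∑ j, w j * exp (t * f j)) := by
  set Y : ι → ι → ℝ := fun i j =>
    w i * w j * (exp (t * f i + s * f j) - exp (s * f i + t * f j)) * f i
  have hswap : ∑ i, ∑ j, Y j i = ∑ i, ∑ j, Y i j := Finset.sum_comm
  calc _ = ∑ i, ∑ j, (Y i j + Y j i) :=
        Finset.sum_congr rfl fun i _ => Finset.sum_congr rfl fun j _ => by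
          simp only [Y, exp_add]; ring
    _ = 2 * ∑ i, ∑ j, Y i j := by simp only [Finset.sum_add_distrib, hswap]; ring
    _ = _ := by
        rw [Finset.sum_mul_sum, Finset.sum_mul_sum, ← Finset.sum_sub_distrib]
        refine congrArg _ (Finset.sum_congr rfl fun i _ => ?_)
        rw [← Finset.sum_sub_distrib]
        exact Finset.sum_congr rfl fun j _ => by simp only [Y, exp_add]; ring

theorem strictMono_tiltedMean {w f : ι → ℝ} (hw : ∀ i, 0 < w i) (hf : ∃ i j, f i ≠ f j) :
    StrictMono (tiltedMean w f) := by
  intro s t hst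
  obtain ⟨i₀, j₀, hij⟩ := hf
  have hZ : ∀ r, 0 < ∑ i, w i * exp (r * f i) := fun r =>
    Finset.sum_pos (fun i _ => mul_pos (hw i) (exp_pos _)) ⟨i₀, Finset.mem_univ _⟩
  have hterm : ∀ i j, 0 ≤ w i * w j *
      ((exp (t * f i + s * f j) - exp (s * f i + t * f j)) * (f i - f j)) := fun i j =>
    mul_nonneg (mul_pos (hw i) (hw j)).le (exp_tilt_swap_mul_sub_nonneg hst _ _)
  have hpos := Finset.sum_pos' (fun i _ => Finset.sum_nonneg fun j _ => hterm i j)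
    ⟨i₀, Finset.mem_univ _, Finset.sum_pos' (fun j _ => hterm i₀ j) ⟨j₀, Finset.mem_univ _,
      mul_pos (mul_pos (hw i₀) (hw j₀)) (exp_tilt_swap_mul_sub_pos hst hij)⟩⟩
  rw [sum_sum_exp_tilt_swap] at hpos
  rw [tiltedMean, tiltedMean, div_lt_div_iff₀ (hZ s) (hZ t)]
  linarith

end TiltedMean

section TiltedFamily

variable {ι : Type*} [Fintype ι] {P₁ P₂ : ι → ℝ}

lemma tilt_zero (h1sum : ∑ x, P₁ x = 1) : tilt P₁ P₂ 0 = P₁ := by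
  funext x
  simp only [tilt, sub_zero, rpow_zero, rpow_one, mul_one, h1sum, div_one]

lemma tilt_one (h2sum : ∑ x, P₂ x = 1) : tilt P₁ P₂ 1 = P₂ := by
  funext x
  simp only [tilt, sub_self, rpow_zero, rpow_one, one_mul, h2sum, div_one]

lemma kl_self (P : ι → ℝ) : kl P P = 0 :=
  Finset.sum_eq_zero fun x _ => by by_cases h : P x = 0 <;> simp [h]

lemma tilt_eq_exp (h1 : ∀ x, 0 < P₁ x) (h2 : ∀ x, 0 < P₂ x) (l : ℝ) (x : ι) :
    tilt P₁ P₂ l x = P₁ x * exp (l * log (P₂ x / P₁ x))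
      / ∑ a, P₁ a * exp (l * log (P₂ a / P₁ a)) := by
  have hrpow : ∀ a, P₁ a ^ (1 - l) * P₂ a ^ l = P₁ a * exp (l * log (P₂ a / P₁ a)) := by
    intro a
    rw [mul_comm l, ← rpow_def_of_pos (div_pos (h2 a) (h1 a)), div_rpow (h2 a).le (h1 a).le,
      rpow_sub (h1 a), rpow_one]
    field_simp [(rpow_pos_of_pos (h1 a) l).ne']
  simp only [tilt, hrpow]

lemma tilt_pos (h1 : ∀ x, 0 < P₁ x) (h2 : ∀ x, 0 < P₂ x) (l : ℝ) (x : ι) :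
    0 < tilt P₁ P₂ l x := by
  rw [tilt_eq_exp h1 h2]
  exact div_pos (mul_pos (h1 x) (exp_pos _))
    (Finset.sum_pos (fun a _ => mul_pos (h1 a) (exp_pos _)) ⟨x, Finset.mem_univ _⟩)

lemma continuous_kl_tilt (h1 : ∀ x, 0 < P₁ x) (h2 : ∀ x, 0 < P₂ x) {P : ι → ℝ}
    (hP : ∀ x, P x ≠ 0) : Continuous fun l => kl (tilt P₁ P₂ l) P := by
  have htilt : ∀ x, Continuous fun l => tilt P₁ P₂ l x := fun x => by
    simp only [tilt_eq_exp h1 h2]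
    exact Continuous.div (by fun_prop) (by fun_prop) fun l =>
      (Finset.sum_pos (fun a _ => mul_pos (h1 a) (exp_pos _)) ⟨x, Finset.mem_univ _⟩).ne'
  exact continuous_finsetSum _ fun x _ => (htilt x).mul <| ((htilt x).div_const _).log
    fun l => div_ne_zero (tilt_pos h1 h2 l x).ne' (hP x)

lemma kl_tilt_sub_kl_tilt (h1 : ∀ x, 0 < P₁ x) (h2 : ∀ x, 0 < P₂ x) (l : ℝ) :
    kl (tilt P₁ P₂ l) P₂ - kl (tilt P₁ P₂ l) P₁
      = -tiltedMean P₁ (fun x => log (P₂ x / P₁ x)) l := by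
  have hlog : ∀ x, log (tilt P₁ P₂ l x / P₂ x) - log (tilt P₁ P₂ l x / P₁ x)
      = -log (P₂ x / P₁ x) := fun x => by
    have ht := (tilt_pos h1 h2 l x).ne'
    rw [log_div ht (h2 x).ne', log_div ht (h1 x).ne', log_div (h2 x).ne' (h1 x).ne']
    ring
  rw [kl, kl, ← Finset.sum_sub_distrib, tiltedMean, Finset.sum_div, ← Finset.sum_neg_distrib]
  refine Finset.sum_congr rfl fun x _ => ?_
  rw [← mul_sub, hlog, tilt_eq_exp h1 h2]
  ring

lemma exists_log_div_ne (h1 : ∀ x, 0 < P₁ x) (h2 : ∀ x, 0 < P₂ x)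
    (hsum : ∑ x, P₁ x = ∑ x, P₂ x) (hne : P₁ ≠ P₂) :
    ∃ x y, log (P₂ x / P₁ x) ≠ log (P₂ y / P₁ y) := by
  by_contra! hconst
  obtain ⟨x₀, -⟩ := Function.ne_iff.1 hne
  set c := P₂ x₀ / P₁ x₀
  have hP₂ : ∀ x, P₂ x = c * P₁ x := fun x => by
    have hx := congrArg exp (hconst x x₀)
    rw [exp_log (div_pos (h2 x) (h1 x)), exp_log (div_pos (h2 x₀) (h1 x₀))] at hx
    exact (div_eq_iff (h1 x).ne').1 hx
  have hc : c = 1 := by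
    have hpos : 0 < ∑ x, P₁ x := Finset.sum_pos (fun x _ => h1 x) ⟨x₀, Finset.mem_univ _⟩
    rw [Finset.sum_congr rfl fun x _ => hP₂ x, ← Finset.mul_sum] at hsum
    field_simp at hsum
    linarith
  exact hne (funext fun x => by rw [hP₂ x, hc, one_mul])

theorem strictAnti_kl_tilt_sub (h1 : ∀ x, 0 < P₁ x) (h2 : ∀ x, 0 < P₂ x)
    (hsum : ∑ x, P₁ x = ∑ x, P₂ x) (hne : P₁ ≠ P₂) :
    StrictAnti fun l => kl (tilt P₁ P₂ l) P₂ - kl (tilt P₁ P₂ l) P₁ := by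
  simp only [kl_tilt_sub_kl_tilt h1 h2]
  exact (strictMono_tiltedMean h1 (exists_log_div_ne h1 h2 hsum hne)).neg

end TiltedFamily

/-- For `0 < γ < D*` the parameters of the two-phase test exist: there are
`l₂ < λ* < l₁` in `[0,1]` with `D(P^(l₁)‖P₂) = γ = D(P^(l₂)‖P₁)`, and the resulting
thresholds satisfy `α₁ > 0 > β₁`. -/
theorem twoPhase_parameters_exist (P₁ P₂ : 𝒳 → ℝ)
    (h1pos : ∀ x, 0 < P₁ x) (h2pos : ∀ x, 0 < P₂ x)
    (h1sum : ∑ x, P₁ x = 1) (h2sum : ∑ x, P₂ x = 1)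
    (hne : P₁ ≠ P₂)
    (ls : ℝ) (hls : ls ∈ Set.Ioo (0:ℝ) 1)
    (hchern : kl (tilt P₁ P₂ ls) P₁ = kl (tilt P₁ P₂ ls) P₂)
    (γ : ℝ) (hγ0 : 0 < γ) (hγD : γ < kl (tilt P₁ P₂ ls) P₁) :
    ∃ l₁ ∈ Set.Icc (0:ℝ) 1, ∃ l₂ ∈ Set.Icc (0:ℝ) 1,
      l₂ < ls ∧ ls < l₁ ∧
      kl (tilt P₁ P₂ l₁) P₂ = γ ∧
      kl (tilt P₁ P₂ l₂) P₁ = γ ∧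
      min (kl (tilt P₁ P₂ l₁) P₂) (kl (tilt P₁ P₂ l₂) P₁) = γ ∧
      0 < kl (tilt P₁ P₂ l₂) P₂ - kl (tilt P₁ P₂ l₂) P₁ ∧
      kl (tilt P₁ P₂ l₁) P₂ - kl (tilt P₁ P₂ l₁) P₁ < 0 := by
  obtain ⟨hls0, hls1⟩ := hls
  have hD1 : kl (tilt P₁ P₂ 0) P₁ = 0 := by rw [tilt_zero h1sum, kl_self]
  have hD2 : kl (tilt P₁ P₂ 1) P₂ = 0 := by rw [tilt_one h2sum, kl_self]
  obtain ⟨l₁, ⟨hls_l₁, hl₁1⟩, hl₁⟩ := intermediate_value_Ioo' hls1.le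
    (continuous_kl_tilt h1pos h2pos fun x => (h2pos x).ne').continuousOn
    (show γ ∈ Set.Ioo _ _ by rw [hD2, ← hchern]; exact ⟨hγ0, hγD⟩)
  obtain ⟨l₂, ⟨hl₂0, hl₂ls⟩, hl₂⟩ := intermediate_value_Ioo hls0.le
    (continuous_kl_tilt h1pos h2pos fun x => (h1pos x).ne').continuousOn
    (show γ ∈ Set.Ioo _ _ by rw [hD1]; exact ⟨hγ0, hγD⟩)
  beta_reduce at hl₁ hl₂
  have hG := strictAnti_kl_tilt_sub h1pos h2pos (h1sum.trans h2sum.symm) hne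
  have hGls : kl (tilt P₁ P₂ ls) P₂ - kl (tilt P₁ P₂ ls) P₁ = 0 := by rw [hchern, sub_self]
  refine ⟨l₁, ⟨by linarith, hl₁1.le⟩, l₂, ⟨hl₂0.le, by linarith⟩, hl₂ls, hls_l₁, hl₁, hl₂,
    by rw [hl₁, hl₂, min_self], hGls ▸ hG hl₂ls, hGls ▸ hG hls_l₁⟩
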